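/- arXiv:2406.09351 — 2 statements merged into one kernel-verified Lean document; each statement's English description precedes it below -/
import Mathlib

section
/- If finite graphs G and H are CR-similar, then for every connected component G' of G there is a connected component H' of H with G' CR-similar to H', and vice versa. -/
attribute [local instance] Classical.propDecidable

/-- The type of colors at round `r` of color refinement. -/
def CType : ℕ → Type
  | 0 => Unit
  | r + 1 => Multiset (CType r)

/-- The color of vertex `x` after `r` rounds of color refinement on `G`. -/
noncomputable def crColor {V : Type*} [Fintype V] (G : SimpleGraph V) :
    (r : ℕ) → V → CType r
  | 0, _ => ()
  | r + 1, x => ((G.neighborSet x).toFinite.toFinset).val.map (crColor G r)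

/-- The full color-refinement color sequence of a vertex. -/
noncomputable def crSeq {V : Type*} [Fintype V] (G : SimpleGraph V) (x : V) :
    (r : ℕ) → CType r :=
  fun r => crColor G r x

/-- The set of full color sequences arising at vertices of `G`. -/
noncomputable def crSet {V : Type*} [Fintype V] (G : SimpleGraph V) :
    Set ((r : ℕ) → CType r) :=
  Set.range (crSeq G)

/-!
Equal colour sequences propagate along edges: if `x` and `y` have the same sequence and `z` is a
neighbour of `x`, then for every round `r` some neighbour of `y` matches `z` up to round `r`.
Since `y` has finitely many neighbours, one of them matches for infinitely many rounds, hence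
for all rounds, as agreement in a round implies agreement in every earlier one. Following walks,
the sequences occurring in the component of `x` are exactly those occurring in the component of
`y`. Finally, colour refinement on a component computes the same colours as on the whole graph,
because a component is closed under taking neighbours.
-/

open SimpleGraph

def CType.truncate : (r : ℕ) → CType (r + 1) → CType r
  | 0, _ => ()
  | r + 1, m => (m : Multiset (CType (r + 1))).map (CType.truncate r)

section ColorRefinement

variable {V W : Type*} [Fintype V] [Fintype W]

lemma crColor_succ (G : SimpleGraph V) (r : ℕ) (x : V) :
    crColor G (r + 1) x = (G.neighborSet x).toFinite.toFinset.val.map (crColor G r) :=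
  rfl

lemma CType.truncate_crColor (G : SimpleGraph V) (r : ℕ) (x : V) :
    CType.truncate r (crColor G (r + 1) x) = crColor G r x := by
  induction r generalizing x with
  | zero => rfl
  | succ r ih =>
    change Multiset.map _ (Multiset.map _ _) = _
    rw [Multiset.map_map, crColor_succ]
    exact Multiset.map_congr rfl fun y _ => ih y

lemma crColor_eq_of_le {A : SimpleGraph V} {B : SimpleGraph W} {x : V} {y : W} {r n : ℕ}
    (hrn : r ≤ n) (h : crColor A n x = crColor B n y) : crColor A r x = crColor B r y := by
  induction n, hrn using Nat.le_induction with
  | base => exact h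
  | succ n _ ih =>
    apply ih
    simpa only [CType.truncate_crColor] using congrArg (CType.truncate n) h

lemma exists_adj_crSeq_eq {A : SimpleGraph V} {B : SimpleGraph W} {x z : V} {y : W}
    (hxy : crSeq A x = crSeq B y) (hxz : A.Adj x z) :
    ∃ w, B.Adj y w ∧ crSeq A z = crSeq B w := by
  have hround : ∀ r : ℕ, ∃ w : (B.neighborSet y).toFinite.toFinset,
      crColor A r z = crColor B r w := by
    intro r
    have hz : crColor A r z ∈ (A.neighborSet x).toFinite.toFinset.val.map (crColor A r) :=
      Multiset.mem_map_of_mem _ (by simpa using hxz)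
    rw [← crColor_succ, show crColor A (r + 1) x = crColor B (r + 1) y from
      congrFun hxy (r + 1), crColor_succ] at hz
    obtain ⟨w, hw, hzw⟩ := Multiset.mem_map.mp hz
    exact ⟨⟨w, hw⟩, hzw.symm⟩
  choose g hg using hround
  obtain ⟨w, hw⟩ := Finite.exists_infinite_fiber g
  refine ⟨w, by simpa using w.2, funext fun r => ?_⟩
  obtain ⟨n, hgn, hrn⟩ := (Set.infinite_coe_iff.mp hw).exists_gt r
  exact crColor_eq_of_le hrn.le (hgn ▸ hg n)

lemma exists_reachable_crSeq_eq {A : SimpleGraph V} {B : SimpleGraph W} {x z : V} {y : W}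
    (hxy : crSeq A x = crSeq B y) (hxz : A.Reachable x z) :
    ∃ w, B.Reachable y w ∧ crSeq A z = crSeq B w := by
  obtain ⟨p⟩ := hxz
  induction p generalizing y with
  | nil => exact ⟨y, .rfl, hxy⟩
  | cons hadj _ ih =>
    obtain ⟨w, hyw, hw⟩ := exists_adj_crSeq_eq hxy hadj
    obtain ⟨w', hww', hw'⟩ := ih hw
    exact ⟨w', hyw.reachable.trans hww', hw'⟩

lemma crSeq_induce_of_adj_mem (G : SimpleGraph V) {s : Set V} [Fintype s]
    (hs : ∀ ⦃a b : V⦄, a ∈ s → G.Adj a b → b ∈ s) (v : s) :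
    crSeq (G.induce s) v = crSeq G v := by
  funext r
  induction r generalizing v with
  | zero => rfl
  | succ r ih =>
    have hnbr : ((G.induce s).neighborSet v).toFinite.toFinset.map
        (Function.Embedding.subtype _) = (G.neighborSet v).toFinite.toFinset := by
      ext a
      simpa using fun ha => hs v.2 ha
    simp only [crSeq, crColor_succ] at ih ⊢
    rw [← hnbr, Finset.map_val, Multiset.map_map]
    exact Multiset.map_congr rfl fun w _ => ih w

lemma crSet_induce_supp (G : SimpleGraph V) (c : G.ConnectedComponent) :
    crSet (G.induce c.supp) = crSeq G '' c.supp := by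
  rw [crSet, Set.image_eq_range]
  exact congrArg Set.range
    (funext (crSeq_induce_of_adj_mem G fun _ _ => c.mem_supp_of_adj_mem_supp))

lemma crSeq_image_supp_subset {A : SimpleGraph V} {B : SimpleGraph W} {x : V} {y : W}
    (hxy : crSeq A x = crSeq B y) :
    crSeq A '' (A.connectedComponentMk x).supp ⊆ crSeq B '' (B.connectedComponentMk y).supp := by
  rintro _ ⟨z, hz, rfl⟩
  obtain ⟨w, hyw, hzw⟩ :=
    exists_reachable_crSeq_eq hxy (ConnectedComponent.exact hz).symm
  exact ⟨w, ConnectedComponent.sound hyw.symm, hzw.symm⟩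

lemma crSet_induce_supp_eq_of_crSeq_eq {A : SimpleGraph V} {B : SimpleGraph W} {x : V} {y : W}
    (hxy : crSeq A x = crSeq B y) :
    crSet (A.induce (A.connectedComponentMk x).supp) =
      crSet (B.induce (B.connectedComponentMk y).supp) := by
  rw [crSet_induce_supp, crSet_induce_supp]
  exact (crSeq_image_supp_subset hxy).antisymm (crSeq_image_supp_subset hxy.symm)

end ColorRefinement

/-- If `G` and `H` are CR-similar, then every connected component of `G` is
CR-similar to some connected component of `H`, and vice versa. -/
theorem stmt_9 {VG VH : Type*} [Fintype VG] [Fintype VH]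
    (G : SimpleGraph VG) (H : SimpleGraph VH)
    (h : crSet G = crSet H) :
    (∀ c : G.ConnectedComponent, ∃ d : H.ConnectedComponent,
      crSet (G.induce c.supp) = crSet (H.induce d.supp)) ∧
    (∀ d : H.ConnectedComponent, ∃ c : G.ConnectedComponent,
      crSet (G.induce c.supp) = crSet (H.induce d.supp)) := by
  constructor
  · rintro ⟨x⟩
    obtain ⟨y, hy⟩ : crSeq G x ∈ crSet H := h ▸ ⟨x, rfl⟩
    exact ⟨H.connectedComponentMk y, crSet_induce_supp_eq_of_crSeq_eq hy.symm⟩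
  · rintro ⟨y⟩
    obtain ⟨x, hx⟩ : crSeq H y ∈ crSet G := h ▸ ⟨y, rfl⟩
    exact ⟨G.connectedComponentMk x, crSet_induce_supp_eq_of_crSeq_eq hx⟩
end

section
/- Let A' be a proper subgraph of A and B' a proper subgraph of B, with A and B both connected finite graphs. Then it is impossible that simultaneously A is CR-similar to B' and B is CR-similar to A'. -/
attribute [local instance] Classical.propDecidable

def cle : (r : ℕ) → CType r → CType r → Prop
  | 0, _, _ => True
  | r+1, M, N => ∃ N' : Multiset (CType r), N' ≤ N ∧ Multiset.Rel (cle r) M N'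

theorem cle_refl : ∀ r (c : CType r), cle r c c
  | 0, _ => trivial
  | r+1, M => ⟨M, le_refl _, Multiset.rel_refl_of_refl_on fun x _ => cle_refl r x⟩

-- rel mono along ≤ : Rel R M N → M' ≤ M → ∃ N' ≤ N, Rel R M' N'
theorem rel_sub {α β : Type*} {R : α → β → Prop} {M : Multiset α} {N : Multiset β}
    (h : Multiset.Rel R M N) {M' : Multiset α} (hM : M' ≤ M) :
    ∃ N' ≤ N, Multiset.Rel R M' N' := by
  induction h generalizing M' with
  | zero => exact ⟨0, le_refl _, by simpa using (Multiset.le_zero.mp hM)⟩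
  | @cons a b as bs hab hrel ih =>
    by_cases ha : a ∈ M'
    · obtain ⟨M'', rfl⟩ := Multiset.exists_cons_of_mem ha
      have : M'' ≤ as := by
        rwa [← Multiset.cons_le_cons_iff a]
      obtain ⟨N'', hN'', hr⟩ := ih this
      exact ⟨b ::ₘ N'', Multiset.cons_le_cons _ hN'', Multiset.Rel.cons hab hr⟩
    · have : M' ≤ as := (Multiset.le_cons_of_notMem ha).mp hM
      obtain ⟨N'', hN'', hr⟩ := ih this
      exact ⟨N'', le_trans hN'' (Multiset.le_cons_self _ _), hr⟩

theorem rel_trans' {α : Type*} {R : α → α → Prop}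
    (hR : ∀ a b c, R a b → R b c → R a c) {s t u : Multiset α}
    (r1 : Multiset.Rel R s t) (r2 : Multiset.Rel R t u) : Multiset.Rel R s u := by
  induction t using Multiset.induction_on generalizing s u with
  | empty => rw [Multiset.rel_zero_right.mp r1, Multiset.rel_zero_left.mp r2]; exact Multiset.Rel.zero
  | cons x t ih =>
    obtain ⟨a, as, ha1, ha2, rfl⟩ := Multiset.rel_cons_right.mp r1
    obtain ⟨b, bs, hb1, hb2, rfl⟩ := Multiset.rel_cons_left.mp r2
    exact Multiset.Rel.cons (hR _ _ _ ha1 hb1) (ih ha2 hb2)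

theorem cle_trans : ∀ r (a b c : CType r), cle r a b → cle r b c → cle r a c
  | 0, _, _, _, _, _ => trivial
  | r+1, M, N, P, ⟨N', hN', hMN⟩, ⟨P', hP', hNP⟩ => by
    obtain ⟨P'', hP'', hr⟩ := rel_sub hNP hN'
    exact ⟨P'', le_trans hP'' hP', rel_trans' (cle_trans r) hMN hr⟩

theorem cle_card {r : ℕ} {M N : CType (r+1)} (h : cle (r+1) M N) :
    Multiset.card (M : Multiset (CType r)) ≤ Multiset.card (N : Multiset (CType r)) := by
  obtain ⟨N', hN', hr⟩ := h
  exact (Multiset.card_eq_card_of_rel hr).le.trans (Multiset.card_le_card hN')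

-- existence of a maximal element
theorem exists_maximal {α : Type*} {R : α → α → Prop}
    (hR : ∀ a b c, R a b → R b c → R a c) (hA : ∀ a b, R a b → R b a → a = b)
    {M : Multiset α} (hM : M ≠ 0) : ∃ m ∈ M, ∀ x ∈ M, R m x → x = m := by
  induction M using Multiset.induction_on with
  | empty => exact absurd rfl hM
  | cons a M ih =>
    by_cases h0 : M = 0
    · subst h0; exact ⟨a, Multiset.mem_cons_self _ _, by intro x hx hr; simpa using hx⟩
    · obtain ⟨m, hm, hmax⟩ := ih h0
      by_cases hma : R m a
      · refine ⟨a, Multiset.mem_cons_self _ _, ?_⟩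
        intro x hx hax
        rcases Multiset.mem_cons.mp hx with rfl | hx
        · rfl
        · have := hmax x hx (hR _ _ _ hma hax)
          subst this
          exact (hA _ _ hax hma).symm
      · refine ⟨m, Multiset.mem_cons_of_mem hm, ?_⟩
        intro x hx hmx
        rcases Multiset.mem_cons.mp hx with rfl | hx
        · exact absurd hmx hma
        · exact hmax x hx hmx

theorem rel_erase {α β : Type*} [DecidableEq α] [DecidableEq β]
    {R : α → β → Prop} {M : Multiset α} {N : Multiset β}
    (h : Multiset.Rel R M N) {a : α} (ha : a ∈ M) :
    ∃ b ∈ N, R a b ∧ Multiset.Rel R (M.erase a) (N.erase b) := by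
  classical
  have hM : a ::ₘ M.erase a = M := Multiset.cons_erase ha
  rw [← hM] at h
  obtain ⟨b, bs, hab, hrel, rfl⟩ := Multiset.rel_cons_left.mp h
  exact ⟨b, Multiset.mem_cons_self _ _, hab, by rwa [Multiset.erase_cons_head]⟩

theorem rel_antisymm {α : Type*} {R : α → α → Prop}
    (hR : ∀ a b c, R a b → R b c → R a c) (hA : ∀ a b, R a b → R b a → a = b) :
    ∀ {M N : Multiset α}, Multiset.Rel R M N → Multiset.Rel R N M → M = N := by
  classical
  suffices h : ∀ n {M N : Multiset α}, Multiset.card M = n →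
      Multiset.Rel R M N → Multiset.Rel R N M → M = N by
    intro M N h1 h2; exact h _ rfl h1 h2
  intro n
  induction n using Nat.strong_induction_on with
  | _ n ih =>
  intro M N hn h1 h2
  subst hn
  rcases eq_or_ne M 0 with rfl | hM0
  · exact (Multiset.rel_zero_left.mp h1).symm
  have hMN0 : M + N ≠ 0 := by simp [hM0]
  obtain ⟨m, hm, hmax⟩ := exists_maximal hR hA hMN0
  -- show m ∈ M and m ∈ N with erasures related
  have key : ∀ {P Q : Multiset α}, Multiset.Rel R P Q → m ∈ P → Q ≤ M + N → m ∈ Q := by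
    intro P Q h hmP hQ
    obtain ⟨b, hb, hrb, _⟩ := rel_erase h hmP
    have := hmax b (Multiset.mem_of_le hQ hb) hrb
    subst this; exact hb
  have hmM : m ∈ M := by
    rcases Multiset.mem_add.mp hm with h | h
    · exact h
    · exact key h2 h (Multiset.le_add_right _ _)
  have hmN : m ∈ N := key h1 hmM (Multiset.le_add_left _ _)
  obtain ⟨b, hb, hrb, hrel1⟩ := rel_erase h1 hmM
  have hbm : b = m := hmax b (Multiset.mem_add.mpr (Or.inr hb)) hrb
  subst hbm
  obtain ⟨a, ha, hra, hrel2⟩ := rel_erase h2 hmN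
  have ham : a = b := hmax a (Multiset.mem_add.mpr (Or.inl ha)) hra
  subst ham
  have hcard : Multiset.card (M.erase a) < Multiset.card M :=
    Multiset.card_erase_lt_of_mem hmM
  have := ih _ hcard rfl hrel1 hrel2
  calc M = a ::ₘ M.erase a := (Multiset.cons_erase hmM).symm
    _ = a ::ₘ N.erase a := by rw [this]
    _ = N := Multiset.cons_erase hmN

theorem cle_antisymm : ∀ r (a b : CType r), cle r a b → cle r b a → a = b
  | 0, _, _, _, _ => rfl
  | r+1, M, N, ⟨N', hN', hMN⟩, ⟨M', hM', hNM⟩ => by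
    have c1 : Multiset.card (M : Multiset (CType r)) = Multiset.card N' :=
      Multiset.card_eq_card_of_rel hMN
    have c2 : Multiset.card (N : Multiset (CType r)) = Multiset.card M' :=
      Multiset.card_eq_card_of_rel hNM
    have hc1 := Multiset.card_le_card hN'
    have hc2 := Multiset.card_le_card hM'
    have eN : N' = N := Multiset.eq_of_le_of_card_le hN' (by omega)
    have eM : M' = M := Multiset.eq_of_le_of_card_le hM' (by omega)
    subst eN; subst eM
    exact rel_antisymm (cle_trans r) (cle_antisymm r) hMN hNM

theorem map_eq_of_rel_le {α γ : Type*} {R : γ → γ → Prop}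
    (hR : ∀ a b c, R a b → R b c → R a c) (hA : ∀ a b, R a b → R b a → a = b) :
    ∀ (M : Multiset α) (f g : α → γ), (∀ x ∈ M, R (f x) (g x)) →
      Multiset.map f M = Multiset.map g M → ∀ x ∈ M, f x = g x := by
  classical
  suffices h : ∀ n (M : Multiset α) (f g : α → γ), Multiset.card M = n →
      (∀ x ∈ M, R (f x) (g x)) → Multiset.map f M = Multiset.map g M →
      ∀ x ∈ M, f x = g x by
    intro M f g; exact h _ M f g rfl
  intro n
  induction n using Nat.strong_induction_on with
  | _ n ih =>
  intro M f g hn hle hmap x hx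
  have hM0 : M ≠ 0 := fun h => by simp [h] at hx
  have hg0 : Multiset.map g M ≠ 0 := by simpa using hM0
  obtain ⟨m, hm, hmax⟩ := exists_maximal hR hA hg0
  have hmf : m ∈ Multiset.map f M := hmap ▸ hm
  obtain ⟨y, hy, hfy⟩ := Multiset.mem_map.mp hmf
  have hgy : g y = f y := by
    have := hmax (g y) (Multiset.mem_map_of_mem g hy) (by rw [← hfy]; exact hle y hy)
    rw [this, ← hfy]
  -- cancel y
  have hMy : y ::ₘ M.erase y = M := Multiset.cons_erase hy
  have hmap' : Multiset.map f (M.erase y) = Multiset.map g (M.erase y) := by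
    have : f y ::ₘ Multiset.map f (M.erase y) = g y ::ₘ Multiset.map g (M.erase y) := by
      rw [← Multiset.map_cons, ← Multiset.map_cons, hMy, hmap]
    rw [hgy] at this
    exact (Multiset.cons_inj_right _).mp this
  have hx2 : x ∈ y ::ₘ M.erase y := by rw [hMy]; exact hx
  rcases Multiset.mem_cons.mp hx2 with rfl | hx'
  · exact hgy.symm
  · exact ih _ (Multiset.card_erase_lt_of_mem hy |>.trans_eq hn) (M.erase y) f g rfl
      (fun z hz => hle z (Multiset.mem_of_mem_erase hz)) hmap' x hx'

attribute [local instance] Classical.propDecidable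

section Graph

variable {V : Type*} [Fintype V] {G : SimpleGraph V} {H : G.Subgraph}

theorem nbhd_sub (v : H.verts) :
    Multiset.map Subtype.val ((H.coe.neighborSet v).toFinite.toFinset).val ≤
      ((G.neighborSet v.val).toFinite.toFinset).val := by
  rw [Multiset.le_iff_subset (Multiset.Nodup.map Subtype.val_injective (Finset.nodup _))]
  intro x hx
  obtain ⟨u, hu, rfl⟩ := Multiset.mem_map.mp hx
  have hu' : H.coe.Adj v u := by
    simpa [Set.Finite.mem_toFinset] using hu
  have : G.Adj v.val u.val := H.adj_sub ((SimpleGraph.Subgraph.coe_adj H v u) ▸ hu')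
  simpa [Set.Finite.mem_toFinset] using this

theorem crColor_sub : ∀ (r : ℕ) (v : H.verts),
    cle r (crColor H.coe r v) (crColor G r v.val)
  | 0, _ => trivial
  | r+1, v => by
    refine ⟨Multiset.map (crColor G r)
      (Multiset.map Subtype.val ((H.coe.neighborSet v).toFinite.toFinset).val), ?_, ?_⟩
    · exact Multiset.map_le_map (nbhd_sub v)
    · show Multiset.Rel _ (Multiset.map (crColor H.coe r) _) _
      rw [Multiset.map_map]
      exact Multiset.rel_map.mpr (Multiset.rel_refl_of_refl_on fun u _ => crColor_sub r u)

end Graph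

section Graph2

variable {V : Type*} [Fintype V] {G : SimpleGraph V} {H : G.Subgraph}

theorem nbhd_eq (v : H.verts) (h1 : crColor H.coe 1 v = crColor G 1 v.val) :
    Multiset.map Subtype.val ((H.coe.neighborSet v).toFinite.toFinset).val =
      ((G.neighborSet v.val).toFinite.toFinset).val := by
  apply Multiset.eq_of_le_of_card_le (nbhd_sub v)
  have h1' : Multiset.map (crColor H.coe 0) ((H.coe.neighborSet v).toFinite.toFinset).val =
      Multiset.map (crColor G 0) ((G.neighborSet v.val).toFinite.toFinset).val := h1
  have := congrArg Multiset.card h1'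
  simpa using this.ge

theorem color_propagate (v : H.verts) (hv : ∀ r, crColor H.coe r v = crColor G r v.val)
    (u : V) (hadj : G.Adj v.val u) :
    ∃ hu : u ∈ H.verts, ∀ r, crColor H.coe r ⟨u, hu⟩ = crColor G r u := by
  have hne := nbhd_eq v (hv 1)
  have humem : u ∈ Multiset.map Subtype.val ((H.coe.neighborSet v).toFinite.toFinset).val := by
    rw [hne]; simpa [Set.Finite.mem_toFinset] using hadj
  obtain ⟨u', hu', rfl⟩ := Multiset.mem_map.mp humem
  refine ⟨u'.2, fun r => ?_⟩
  have key : ∀ r, ∀ x ∈ ((H.coe.neighborSet v).toFinite.toFinset).val,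
      crColor H.coe r x = crColor G r x.val := by
    intro r x hx
    have hmap : Multiset.map (crColor H.coe r) ((H.coe.neighborSet v).toFinite.toFinset).val =
        Multiset.map (fun y : H.verts => crColor G r y.val)
          ((H.coe.neighborSet v).toFinite.toFinset).val := by
      have hr1 : crColor H.coe (r+1) v = crColor G (r+1) v.val := hv (r+1)
      have : Multiset.map (crColor H.coe r) ((H.coe.neighborSet v).toFinite.toFinset).val =
          Multiset.map (crColor G r) ((G.neighborSet v.val).toFinite.toFinset).val := hr1
      rw [← hne, Multiset.map_map] at this
      exact this
    exact map_eq_of_rel_le (cle_trans r) (cle_antisymm r) _ _ _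
      (fun y _ => crColor_sub r y) hmap x hx
  have : (⟨u'.val, u'.2⟩ : H.verts) = u' := rfl
  rw [this]
  exact key r u' hu'

end Graph2

section Graph3

variable {V : Type*} [Fintype V] {G : SimpleGraph V} {H : G.Subgraph}

theorem subgraph_eq_top (hconn : G.Connected) (b0 : H.verts)
    (hb0 : ∀ r, crColor H.coe r b0 = crColor G r b0.val) : H = ⊤ := by
  set S : V → Prop := fun b => ∃ hb : b ∈ H.verts, ∀ r, crColor H.coe r ⟨b, hb⟩ = crColor G r b
    with hS
  have hSb0 : S b0.val := ⟨b0.2, hb0⟩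
  have step : ∀ x y, G.Adj x y → S x → S y := by
    rintro x y hadj ⟨hx, hcol⟩
    exact color_propagate ⟨x, hx⟩ hcol y hadj
  have walkS : ∀ (x y : V) (_ : G.Walk x y), S x → S y := by
    intro x y w
    induction w with
    | nil => exact id
    | cons h _ ih => exact fun hs => ih (step _ _ h hs)
  have hall : ∀ b, S b := fun b => walkS _ _ (hconn.preconnected b0.val b).some hSb0
  have hverts : H.verts = Set.univ := by
    ext b; simpa using (hall b).1
  ext x y
  · simp [hverts]
  · simp only [SimpleGraph.Subgraph.top_adj]
    constructor
    · exact fun h => H.adj_sub h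
    · intro hadj
      obtain ⟨hx, hcol⟩ := hall x
      have hne := nbhd_eq (⟨x, hx⟩ : H.verts) (hcol 1)
      have hy : y ∈ Multiset.map Subtype.val
          ((H.coe.neighborSet ⟨x, hx⟩).toFinite.toFinset).val := by
        rw [hne]; simpa [Set.Finite.mem_toFinset] using hadj
      obtain ⟨y', hy', rfl⟩ := Multiset.mem_map.mp hy
      have : H.coe.Adj ⟨x, hx⟩ y' := by
        simpa [Set.Finite.mem_toFinset] using hy'
      rw [SimpleGraph.Subgraph.coe_adj] at this
      exact this

end Graph3


/-- For connected finite graphs `A` and `B` with proper subgraphs `A'` and `B'`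
respectively, it is impossible that simultaneously `A` is CR-similar to `B'`
and `B` is CR-similar to `A'`. -/
theorem stmt_12 {VA VB : Type*} [Fintype VA] [Fintype VB]
    (A : SimpleGraph VA) (B : SimpleGraph VB)
    (hA : A.Connected) (hB : B.Connected)
    (A' : A.Subgraph) (hA' : A' ≠ ⊤) (B' : B.Subgraph) (hB' : B' ≠ ⊤) :
    ¬(crSet A = crSet B'.coe ∧ crSet B = crSet A'.coe) := by
  rintro ⟨h1, h2⟩
  -- choice functions
  have hf : ∀ a : VA, ∃ b : B'.verts, crSeq B'.coe b = crSeq A a := by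
    intro a
    have : crSeq A a ∈ crSet B'.coe := h1 ▸ Set.mem_range_self a
    exact this
  have hg : ∀ b : VB, ∃ a : A'.verts, crSeq A'.coe a = crSeq B b := by
    intro b
    have : crSeq B b ∈ crSet A'.coe := h2 ▸ Set.mem_range_self b
    exact this
  choose f hfspec using hf
  choose g hgspec using hg
  set φ : VA → VA := fun a => (g (f a).val).val with hφ
  have step : ∀ (a : VA) (r : ℕ), cle r (crSeq A a r) (crSeq A (φ a) r) := by
    intro a r
    have e1 : crSeq A a r = crSeq B'.coe (f a) r := (congrFun (hfspec a) r).symm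
    have d1 : cle r (crSeq B'.coe (f a) r) (crSeq B (f a).val r) := crColor_sub r (f a)
    have e2 : crSeq B (f a).val r = crSeq A'.coe (g (f a).val) r :=
      (congrFun (hgspec (f a).val) r).symm
    have d2 : cle r (crSeq A'.coe (g (f a).val) r) (crSeq A (φ a) r) :=
      crColor_sub r (g (f a).val)
    rw [e1]
    exact cle_trans r _ _ _ d1 (e2 ▸ d2)
  have iter : ∀ (m : ℕ) (a : VA) (r : ℕ), cle r (crSeq A a r) (crSeq A (φ^[m] a) r) := by
    intro m
    induction m with
    | zero => intro a r; exact cle_refl r _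
    | succ m ih =>
      intro a r
      rw [Function.iterate_succ_apply']
      exact cle_trans r _ _ _ (ih a r) (step (φ^[m] a) r)
  have : Nonempty VA := hA.nonempty
  obtain ⟨a₀⟩ := this
  obtain ⟨i, j, hij, heq⟩ : ∃ i j : ℕ, i < j ∧ φ^[i] a₀ = φ^[j] a₀ := by
    obtain ⟨i, j, hne, heq⟩ := Finite.exists_ne_map_eq_of_infinite (fun n : ℕ => φ^[n] a₀)
    rcases lt_or_gt_of_ne hne with h | h
    · exact ⟨i, j, h, heq⟩
    · exact ⟨j, i, h, heq.symm⟩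
  set x := φ^[i] a₀ with hx
  have hcycle : φ^[j - i] x = x := by
    rw [hx, ← Function.iterate_add_apply]
    have : j - i + i = j := by omega
    rw [this, ← heq]
  have hk : j - i = (j - i - 1) + 1 := by omega
  -- per-round equality crSeq A x = crSeq A (φ x)
  have eqstep : ∀ r, crSeq A x r = crSeq A (φ x) r := by
    intro r
    refine cle_antisymm r _ _ (step x r) ?_
    have : φ^[j - i - 1] (φ x) = x := by
      rw [← Function.iterate_succ_apply]
      rw [show (j - i - 1).succ = j - i by omega]
      exact hcycle
    have h' := iter (j - i - 1) (φ x) r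
    rwa [this] at h'
  -- tightness: B' color equals B color at f x
  have btight : ∀ r, crColor B'.coe r (f x) = crColor B r (f x).val := by
    intro r
    have e1 : crSeq B'.coe (f x) r = crSeq A x r := congrFun (hfspec x) r
    have d1 : cle r (crSeq B'.coe (f x) r) (crSeq B (f x).val r) := crColor_sub r (f x)
    have e2 : crSeq B (f x).val r = crSeq A'.coe (g (f x).val) r :=
      (congrFun (hgspec (f x).val) r).symm
    have d2 : cle r (crSeq A'.coe (g (f x).val) r) (crSeq A (φ x) r) :=
      crColor_sub r (g (f x).val)
    have d2' : cle r (crSeq B (f x).val r) (crSeq B'.coe (f x) r) := by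
      rw [e2, e1, eqstep r]
      exact d2
    exact cle_antisymm r _ _ d1 d2'
  exact hB' (subgraph_eq_top hB (f x) btight)
end
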